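/- arXiv:1102.5714 — 2 statements merged into one kernel-verified Lean document; each statement's English description precedes it below -/
import Mathlib

section
/- Let μ be a finite Borel measure on a compact interval [a,b] ⊂ (0,∞) with the band property: there is C₀ ≥ 0 such that μ({y : |√y − s| ≤ η}) ≤ C₀ η for all s ≥ 0 and η > 0. Then for every ψ ∈ L²(μ), every T > 0 and every ε ∈ (0,1], ∫₀^T |∫_{[a,b]} exp(i √λ t / ε) ψ(λ) dμ(λ)|² dt ≤ C ε ‖ψ‖²_{L²(μ)}, where C depends only on C₀ and T. -/
/-!
Write `g t = ∫ exp (i √λ t / ε) ψ(λ) dμ(λ)`. On `(0, T]` the weight `exp (T² - t²)` is at least `1`,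
so it suffices to bound `∫ exp (-t²) |g t|² dt` over all of `ℝ`. Expanding `|g t|²` as a double
integral and integrating in `t` first (the Fourier transform of the Gaussian) turns it into
`√π ∬ K(x, y) ψ(x) ψ̄(y)` with the symmetric kernel `K(x, y) = exp (-(√x - √y)² / (4ε²))`.
For a symmetric kernel, `|ψ(x)| |ψ(y)| ≤ (|ψ(x)|² + |ψ(y)|²) / 2` gives the Schur bound
`sup_x ∫ K(x, ·) dμ · ‖ψ‖²`. Finally, cutting the line into the bands
`k ε ≤ |√y - √x| < (k + 1) ε`, of `μ`-mass at most `C₀ (k + 1) ε`, on which `K ≤ exp (-k² / 4)`,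
gives `∫ K(x, ·) dμ ≤ C₀ ε ∑ₖ (k + 1) exp (-k² / 4)`.
-/

open MeasureTheory

open Complex Real Set ComplexConjugate

lemma setIntegral_Ioc_le_exp_sq_mul_integral {f : ℝ → ℝ} (hf : 0 ≤ f)
    (hint : Integrable fun t => rexp (-t ^ 2) * f t) (T : ℝ) :
    ∫ t in Ioc 0 T, f t ≤ rexp (T ^ 2) * ∫ t, rexp (-t ^ 2) * f t := by
  have hweight : ∀ t ∈ Ioc 0 T, f t ≤ rexp (T ^ 2) * (rexp (-t ^ 2) * f t) := by
    intro t ht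
    have : 1 ≤ rexp (T ^ 2) * rexp (-t ^ 2) := by
      rw [← Real.exp_add, one_le_exp_iff]
      nlinarith [ht.1, ht.2]
    simpa only [mul_assoc] using le_mul_of_one_le_left (hf t) this
  calc ∫ t in Ioc 0 T, f t ≤ ∫ t in Ioc 0 T, rexp (T ^ 2) * (rexp (-t ^ 2) * f t) :=
        integral_mono_of_nonneg (ae_of_all _ hf) (hint.const_mul _).restrict
          ((ae_restrict_iff' measurableSet_Ioc).2 (ae_of_all _ hweight))
    _ = rexp (T ^ 2) * ∫ t in Ioc 0 T, rexp (-t ^ 2) * f t := integral_const_mul _ _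
    _ ≤ rexp (T ^ 2) * ∫ t, rexp (-t ^ 2) * f t :=
        mul_le_mul_of_nonneg_left (setIntegral_le_integral hint
          (ae_of_all _ fun t => mul_nonneg (exp_pos _).le (hf t))) (exp_pos _).le

lemma integral_exp_neg_sq_mul_cexp (ω : ℝ) :
    ∫ t : ℝ, (rexp (-t ^ 2) : ℂ) * cexp (I * ↑(ω * t)) = ↑(√π * rexp (-ω ^ 2 / 4)) := by
  have h := fourierIntegral_gaussian (b := 1) (by simp) ω
  simp only [div_one, neg_mul, one_mul, mul_one] at h
  have hsqrt : (π : ℂ) ^ (1 / 2 : ℂ) = ↑(√π) := by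
    rw [sqrt_eq_rpow, ofReal_cpow pi_nonneg]
    norm_num
  rw [hsqrt] at h
  convert h using 2
  · funext t
    push_cast
    ring_nf
  · push_cast
    ring_nf

section GaussianRegularization

variable {X : Type*}

noncomputable def oscillatoryIntegral [MeasurableSpace X] (μ : Measure X) (φ : X → ℝ) (ψ : X → ℂ)
    (t : ℝ) : ℂ :=
  ∫ x, cexp (I * ↑(φ x * t)) * ψ x ∂μ

noncomputable def gaussianCorrelation (φ : X → ℝ) (ψ : X → ℂ) (t : ℝ) (z : X × X) : ℂ :=
  ↑(rexp (-t ^ 2)) * (cexp (I * ↑(φ z.1 * t)) * ψ z.1 * conj (cexp (I * ↑(φ z.2 * t)) * ψ z.2))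

variable {φ : X → ℝ} {ψ : X → ℂ}

lemma norm_gaussianCorrelation (t : ℝ) (z : X × X) :
    ‖gaussianCorrelation φ ψ t z‖ = rexp (-t ^ 2) * (‖ψ z.1‖ * ‖ψ z.2‖) := by
  simp only [gaussianCorrelation, norm_mul, RCLike.norm_conj, norm_exp_I_mul_ofReal, norm_real,
    Real.norm_of_nonneg (exp_pos _).le]
  ring

lemma integral_gaussianCorrelation_time (z : X × X) :
    ∫ t, gaussianCorrelation φ ψ t z =
      ↑(√π * rexp (-(φ z.1 - φ z.2) ^ 2 / 4)) * (ψ z.1 * conj (ψ z.2)) := by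
  have hphase (t : ℝ) : gaussianCorrelation φ ψ t z =
      ↑(rexp (-t ^ 2)) * cexp (I * ↑((φ z.1 - φ z.2) * t)) * (ψ z.1 * conj (ψ z.2)) := by
    simp only [gaussianCorrelation, map_mul, ← exp_conj, conj_I, conj_ofReal]
    rw [show I * ↑((φ z.1 - φ z.2) * t) = I * ↑(φ z.1 * t) + -I * ↑(φ z.2 * t) by
      push_cast; ring, Complex.exp_add]
    ring
  simp_rw [hphase]
  rw [integral_mul_const, integral_exp_neg_sq_mul_cexp]

variable [MeasurableSpace X] {μ : Measure X}

lemma integral_gaussianCorrelation_prod [SFinite μ] (t : ℝ) :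
    ∫ z, gaussianCorrelation φ ψ t z ∂μ.prod μ =
      ↑(rexp (-t ^ 2) * ‖oscillatoryIntegral μ φ ψ t‖ ^ 2) := by
  simp only [gaussianCorrelation, oscillatoryIntegral]
  rw [integral_const_mul, integral_prod_mul (fun x => cexp (I * ↑(φ x * t)) * ψ x)
    (fun x => conj (cexp (I * ↑(φ x * t)) * ψ x)), integral_conj, mul_conj, normSq_eq_norm_sq]
  push_cast
  ring

lemma integrable_gaussianCorrelation (hφ : Measurable φ) (hψ : Integrable ψ μ) :
    Integrable (Function.uncurry (gaussianCorrelation φ ψ)) (volume.prod (μ.prod μ)) := by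
  have hdom : Integrable (fun p : ℝ × X × X => rexp (-p.1 ^ 2) * (‖ψ p.2.1‖ * ‖ψ p.2.2‖))
      (volume.prod (μ.prod μ)) := by
    refine Integrable.mul_prod (f := fun t : ℝ => rexp (-t ^ 2)) ?_ (hψ.norm.mul_prod hψ.norm)
    simpa using integrable_exp_neg_mul_sq one_pos
  refine hdom.mono' ?_ (ae_of_all _ fun p => (norm_gaussianCorrelation p.1 p.2).le)
  have hψ₁ : AEStronglyMeasurable (fun p : ℝ × X × X => ψ p.2.1) (volume.prod (μ.prod μ)) :=
    hψ.1.comp_fst.comp_snd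
  have hψ₂ : AEStronglyMeasurable (fun p : ℝ × X × X => ψ p.2.2) (volume.prod (μ.prod μ)) :=
    hψ.1.comp_snd.comp_snd
  have hG : AEStronglyMeasurable (fun p : ℝ × X × X => (rexp (-p.1 ^ 2) : ℂ))
      (volume.prod (μ.prod μ)) := (by fun_prop : Measurable _).aestronglyMeasurable
  have he₁ : AEStronglyMeasurable (fun p : ℝ × X × X => cexp (I * ↑(φ p.2.1 * p.1)))
      (volume.prod (μ.prod μ)) := (by fun_prop : Measurable _).aestronglyMeasurable
  have he₂ : AEStronglyMeasurable (fun p : ℝ × X × X => cexp (I * ↑(φ p.2.2 * p.1)))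
      (volume.prod (μ.prod μ)) := (by fun_prop : Measurable _).aestronglyMeasurable
  exact hG.mul ((he₁.mul hψ₁).mul (he₂.mul hψ₂).star)

lemma integrable_gaussian_mul_norm_oscillatoryIntegral_sq [SFinite μ] (hφ : Measurable φ)
    (hψ : Integrable ψ μ) :
    Integrable fun t => rexp (-t ^ 2) * ‖oscillatoryIntegral μ φ ψ t‖ ^ 2 := by
  refine (integrable_gaussianCorrelation hφ hψ).integral_prod_left.re.congr
    (ae_of_all _ fun t => ?_)
  dsimp only [Function.uncurry_apply_pair]
  rw [integral_gaussianCorrelation_prod, RCLike.re_to_complex, ofReal_re]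

theorem integral_gaussian_mul_norm_oscillatoryIntegral_sq_le [SFinite μ] (hφ : Measurable φ)
    (hψ : Integrable ψ μ) :
    ∫ t, rexp (-t ^ 2) * ‖oscillatoryIntegral μ φ ψ t‖ ^ 2 ≤
      √π * ∫ z, rexp (-(φ z.1 - φ z.2) ^ 2 / 4) * (‖ψ z.1‖ * ‖ψ z.2‖) ∂μ.prod μ := by
  calc ∫ t, rexp (-t ^ 2) * ‖oscillatoryIntegral μ φ ψ t‖ ^ 2
      = (∫ t, ∫ z, gaussianCorrelation φ ψ t z ∂μ.prod μ).re := by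
        simp_rw [integral_gaussianCorrelation_prod, integral_complex_ofReal, ofReal_re]
    _ = (∫ z, (∫ t, gaussianCorrelation φ ψ t z) ∂μ.prod μ).re := by
        rw [integral_integral_swap (integrable_gaussianCorrelation hφ hψ)]
    _ ≤ ∫ z, ‖∫ t, gaussianCorrelation φ ψ t z‖ ∂μ.prod μ :=
        (re_le_norm _).trans (norm_integral_le_integral_norm _)
    _ = ∫ z, √π * (rexp (-(φ z.1 - φ z.2) ^ 2 / 4) * (‖ψ z.1‖ * ‖ψ z.2‖)) ∂μ.prod μ := by
        congr with z
        rw [integral_gaussianCorrelation_time, norm_mul, norm_mul, RCLike.norm_conj, norm_real,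
          Real.norm_of_nonneg (by positivity)]
        ring
    _ = _ := integral_const_mul _ _

end GaussianRegularization

theorem integral_kernel_mul_norm_mul_norm_le {X E : Type*} [MeasurableSpace X]
    [NormedAddCommGroup E] {μ : Measure X} [IsFiniteMeasure μ] {K : X × X → ℝ} {M A : ℝ}
    (hK : Measurable K) (hK_nonneg : ∀ z, 0 ≤ K z) (hK_le : ∀ z, K z ≤ M)
    (hK_symm : ∀ x y, K (x, y) = K (y, x)) (hK_row : ∀ x, ∫ y, K (x, y) ∂μ ≤ A)
    {ψ : X → E} (hψ : MemLp ψ 2 μ) :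
    ∫ z, K z * (‖ψ z.1‖ * ‖ψ z.2‖) ∂μ.prod μ ≤ A * ∫ x, ‖ψ x‖ ^ 2 ∂μ := by
  have hψ2 : Integrable (fun x => ‖ψ x‖ ^ 2) μ := hψ.norm.integrable_sq
  have h₁ : Integrable (fun z : X × X => K z * ‖ψ z.1‖ ^ 2) (μ.prod μ) := by
    refine ((hψ2.comp_fst μ).const_mul M).mono' (hK.aestronglyMeasurable.mul hψ2.1.comp_fst)
      (ae_of_all _ fun z => ?_)
    rw [Real.norm_of_nonneg (mul_nonneg (hK_nonneg z) (sq_nonneg _))]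
    exact mul_le_mul_of_nonneg_right (hK_le z) (sq_nonneg _)
  have hswap : (fun z : X × X => K z * ‖ψ z.1‖ ^ 2) ∘ Prod.swap =
      fun z => K z * ‖ψ z.2‖ ^ 2 := by
    ext ⟨x, y⟩
    simp only [Function.comp_apply, Prod.swap_prod_mk, hK_symm y x]
  have h₂ : Integrable (fun z : X × X => K z * ‖ψ z.2‖ ^ 2) (μ.prod μ) := hswap ▸ h₁.swap
  have h₂_eq : ∫ z, K z * ‖ψ z.2‖ ^ 2 ∂μ.prod μ = ∫ z, K z * ‖ψ z.1‖ ^ 2 ∂μ.prod μ := by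
    rw [← hswap]
    exact integral_prod_swap (fun z : X × X => K z * ‖ψ z.1‖ ^ 2)
  calc ∫ z, K z * (‖ψ z.1‖ * ‖ψ z.2‖) ∂μ.prod μ
      ≤ ∫ z, (K z * ‖ψ z.1‖ ^ 2 + K z * ‖ψ z.2‖ ^ 2) / 2 ∂μ.prod μ := by
        refine integral_mono_of_nonneg (ae_of_all _ fun z => ?_) ((h₁.add h₂).div_const 2)
          (ae_of_all _ fun z => ?_)
        · have := hK_nonneg z
          positivity
        · nlinarith [mul_nonneg (hK_nonneg z) (sq_nonneg (‖ψ z.1‖ - ‖ψ z.2‖))]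
    _ = ∫ z, K z * ‖ψ z.1‖ ^ 2 ∂μ.prod μ := by
        rw [integral_div, integral_add h₁ h₂, h₂_eq]
        ring
    _ = ∫ x, (∫ y, K (x, y) ∂μ) * ‖ψ x‖ ^ 2 ∂μ := by
        rw [integral_prod _ h₁]
        simp_rw [integral_mul_const]
    _ ≤ ∫ x, A * ‖ψ x‖ ^ 2 ∂μ :=
        integral_mono_of_nonneg
          (ae_of_all _ fun x => mul_nonneg (integral_nonneg fun y => hK_nonneg _) (sq_nonneg _))
          (hψ2.const_mul A)
          (ae_of_all _ fun x => mul_le_mul_of_nonneg_right (hK_row x) (sq_nonneg _))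
    _ = A * ∫ x, ‖ψ x‖ ^ 2 ∂μ := integral_const_mul _ _

lemma summable_succ_mul_exp_neg_mul_sq {c : ℝ} (hc : 0 < c) :
    Summable fun k : ℕ => ((k : ℝ) + 1) * rexp (-c * k ^ 2) := by
  have hmaj : Summable fun k : ℕ => (k : ℝ) ^ 1 * rexp (-c * k) + (k : ℝ) ^ 0 * rexp (-c * k) :=
    (summable_pow_mul_exp_neg_nat_mul 1 hc).add (summable_pow_mul_exp_neg_nat_mul 0 hc)
  refine hmaj.of_nonneg_of_le (fun k => by positivity) fun k => ?_
  have hk : (k : ℝ) ≤ (k : ℝ) ^ 2 := by exact_mod_cast Nat.le_self_pow two_ne_zero k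
  calc ((k : ℝ) + 1) * rexp (-c * k ^ 2) ≤ ((k : ℝ) + 1) * rexp (-c * k) :=
        mul_le_mul_of_nonneg_left (exp_le_exp.2 (by nlinarith)) (by positivity)
    _ = _ := by ring

theorem integral_exp_neg_mul_sq_div_le_of_band {X : Type*} [MeasurableSpace X] {μ : Measure X}
    {u : X → ℝ} (hu : Measurable u) {C₀ ε c : ℝ} (hC₀ : 0 ≤ C₀) (hε : 0 < ε) (hc : 0 < c)
    (hband : ∀ η > 0, μ {x | |u x| ≤ η} ≤ ENNReal.ofReal (C₀ * η)) :
    ∫ x, rexp (-c * (u x / ε) ^ 2) ∂μ ≤ C₀ * ε * ∑' k : ℕ, ((k : ℝ) + 1) * rexp (-c * k ^ 2) := by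
  set band : ℕ → Set X := fun k => {x | ⌊|u x| / ε⌋₊ = k}
  have hband_meas (k : ℕ) : MeasurableSet (band k) :=
    (hu.abs.div_const ε).nat_floor (measurableSet_singleton k)
  have hμ_band (k : ℕ) : μ (band k) ≤ ENNReal.ofReal (C₀ * ((k + 1) * ε)) := by
    refine (measure_mono fun x (hx : ⌊|u x| / ε⌋₊ = k) => ?_).trans (hband _ (by positivity))
    have := Nat.lt_floor_add_one (|u x| / ε)
    rw [hx, div_lt_iff₀ hε] at this
    exact this.le
  have hpoint (x : X) : ENNReal.ofReal (rexp (-c * (u x / ε) ^ 2)) ≤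
      ∑' k, (band k).indicator (fun _ => ENNReal.ofReal (rexp (-c * k ^ 2))) x := by
    set k := ⌊|u x| / ε⌋₊
    refine le_trans ?_ (ENNReal.le_tsum k)
    rw [indicator_of_mem (show x ∈ band k from rfl)]
    have hk : (k : ℝ) ≤ |u x| / ε := Nat.floor_le (by positivity)
    have hsq : (k : ℝ) ^ 2 ≤ (u x / ε) ^ 2 := by
      rw [← sq_abs (u x / ε), abs_div, abs_of_pos hε]
      gcongr
    exact ENNReal.ofReal_le_ofReal (exp_le_exp.2 (by nlinarith))
  rw [integral_eq_lintegral_of_nonneg_ae (ae_of_all _ fun x => (exp_pos _).le)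
    (by fun_prop)]
  have hsum := summable_succ_mul_exp_neg_mul_sq hc
  refine ENNReal.toReal_le_of_le_ofReal
    (mul_nonneg (by positivity) (tsum_nonneg fun k => by positivity)) ?_
  calc ∫⁻ x, ENNReal.ofReal (rexp (-c * (u x / ε) ^ 2)) ∂μ
      ≤ ∫⁻ x, ∑' k, (band k).indicator (fun _ => ENNReal.ofReal (rexp (-c * k ^ 2))) x ∂μ :=
        lintegral_mono hpoint
    _ = ∑' k : ℕ, ENNReal.ofReal (rexp (-c * k ^ 2)) * μ (band k) := by
        rw [lintegral_tsum fun k => (measurable_const.indicator (hband_meas k)).aemeasurable]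
        simp_rw [lintegral_indicator_const (hband_meas _)]
    _ ≤ ∑' k : ℕ, ENNReal.ofReal (rexp (-c * k ^ 2)) * ENNReal.ofReal (C₀ * ((k + 1) * ε)) :=
        ENNReal.tsum_le_tsum fun k => by gcongr; exact hμ_band k
    _ = ENNReal.ofReal (∑' k : ℕ, C₀ * ε * (((k : ℝ) + 1) * rexp (-c * k ^ 2))) := by
        rw [ENNReal.ofReal_tsum_of_nonneg (fun k => by positivity) (hsum.mul_left _)]
        congr 1 with k
        rw [← ENNReal.ofReal_mul (exp_pos _).le]
        ring_nf
    _ = _ := by rw [tsum_mul_left]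

theorem stmt11_general (C₀ T : ℝ) (hC₀ : 0 ≤ C₀) :
    ∃ C > (0 : ℝ), ∀ (μ : Measure ℝ), IsFiniteMeasure μ →
      ∀ a b : ℝ, 0 < a → a ≤ b → μ (Set.Icc a b)ᶜ = 0 →
      (∀ s ≥ (0 : ℝ), ∀ η > (0 : ℝ),
        μ {y | |Real.sqrt y - s| ≤ η} ≤ ENNReal.ofReal (C₀ * η)) →
      ∀ ψ : ℝ → ℂ, MemLp ψ 2 μ → ∀ ε : ℝ, 0 < ε → ε ≤ 1 →
        (∫ t in Set.Ioc (0 : ℝ) T,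
            ‖∫ lam in Set.Icc a b,
                Complex.exp (Complex.I * ((Real.sqrt lam * t / ε : ℝ) : ℂ)) * ψ lam ∂μ‖ ^ 2)
          ≤ C * ε * ∫ lam, ‖ψ lam‖ ^ 2 ∂μ := by
  set S := ∑' k : ℕ, ((k : ℝ) + 1) * rexp (-(1 / 4) * k ^ 2)
  have hS : 0 ≤ S := tsum_nonneg fun k => by positivity
  refine ⟨rexp (T ^ 2) * √π * (C₀ * S) + 1, by positivity, ?_⟩
  intro μ _ a b _ _ hsupp hband ψ hψ ε hε _
  set φ : ℝ → ℝ := fun x => √x / ε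
  have hφ : Measurable φ := by fun_prop
  have hψ₁ : Integrable ψ μ := hψ.integrable one_le_two
  have hrow (x : ℝ) : ∫ y, rexp (-(φ x - φ y) ^ 2 / 4) ∂μ ≤ C₀ * ε * S := by
    convert integral_exp_neg_mul_sq_div_le_of_band (u := fun y => √y - √x) (c := 1 / 4)
      (by fun_prop) hC₀ hε (by norm_num) (hband _ (sqrt_nonneg x)) using 3 with y
    simp only [φ]
    congr 1
    ring
  have hschur := integral_kernel_mul_norm_mul_norm_le
    (K := fun z => rexp (-(φ z.1 - φ z.2) ^ 2 / 4)) (by fun_prop) (fun z => (exp_pos _).le)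
    (fun z => exp_le_one_iff.2 (by nlinarith [sq_nonneg (φ z.1 - φ z.2)]))
    (fun x y => by ring_nf) hrow hψ
  rw [Measure.restrict_eq_self_of_ae_mem (ae_iff.2 hsupp)]
  simp_rw [← div_mul_eq_mul_div]
  change ∫ t in Ioc 0 T, ‖oscillatoryIntegral μ φ ψ t‖ ^ 2 ≤ _
  calc ∫ t in Ioc 0 T, ‖oscillatoryIntegral μ φ ψ t‖ ^ 2
      ≤ rexp (T ^ 2) * ∫ t, rexp (-t ^ 2) * ‖oscillatoryIntegral μ φ ψ t‖ ^ 2 :=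
        setIntegral_Ioc_le_exp_sq_mul_integral (fun t => sq_nonneg _)
          (integrable_gaussian_mul_norm_oscillatoryIntegral_sq hφ hψ₁) T
    _ ≤ rexp (T ^ 2) * (√π * (C₀ * ε * S * ∫ x, ‖ψ x‖ ^ 2 ∂μ)) := by
        gcongr
        exact (integral_gaussian_mul_norm_oscillatoryIntegral_sq_le hφ hψ₁).trans
          (mul_le_mul_of_nonneg_left hschur (sqrt_nonneg π))
    _ ≤ (rexp (T ^ 2) * √π * (C₀ * S) + 1) * ε * ∫ x, ‖ψ x‖ ^ 2 ∂μ := by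
        have : 0 ≤ ε * ∫ x, ‖ψ x‖ ^ 2 ∂μ :=
          mul_nonneg hε.le (integral_nonneg fun x => by positivity)
        nlinarith

/-- Abstract dispersive estimate (Lemma 5.2): for a finite measure on `[a,b] ⊂ (0,∞)`
whose mass in `√`-scale bands of width `η` is `≤ C₀ η`, oscillatory integrals
`∫ exp(i√λ t/ε) ψ dμ` decay in `L²(0,T)` at rate `√ε`, with a constant depending
only on `C₀` and `T`. -/
theorem stmt11 (C₀ T : ℝ) (hC₀ : 0 ≤ C₀) (hT : 0 < T) :
    ∃ C > (0 : ℝ), ∀ (μ : Measure ℝ), IsFiniteMeasure μ →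
      ∀ a b : ℝ, 0 < a → a ≤ b → μ (Set.Icc a b)ᶜ = 0 →
      (∀ s ≥ (0 : ℝ), ∀ η > (0 : ℝ),
        μ {y | |Real.sqrt y - s| ≤ η} ≤ ENNReal.ofReal (C₀ * η)) →
      ∀ ψ : ℝ → ℂ, MemLp ψ 2 μ → ∀ ε : ℝ, 0 < ε → ε ≤ 1 →
        (∫ t in Set.Ioc (0 : ℝ) T,
            ‖∫ lam in Set.Icc a b,
                Complex.exp (Complex.I * ((Real.sqrt lam * t / ε : ℝ) : ℂ)) * ψ lam ∂μ‖ ^ 2)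
          ≤ C * ε * ∫ lam, ‖ψ lam‖ ^ 2 ∂μ :=
  stmt11_general C₀ T hC₀
end

section
/- Let T > 0 and let g : ℝ → ℂ be of the form g(t) = ∫_{[a,b]} e^{iλt} h(λ) dν(λ) for a finite Borel measure ν on [a,b] ⊂ ℝ and h ∈ L²(ν). Then ∫₀^T |g(t)|² dt ≤ e √π T ∬ h(x) conj(h(y)) exp(−T²(x − y)²/4) dν(x) dν(y), where the right-hand double integral is real and nonnegative. -/
/-!
On `[0, T]` one has `1 ≤ e · exp (-(t / T) ^ 2)`, so `∫₀ᵀ |g|² ≤ e ∫_ℝ exp (-(t / T) ^ 2) |g t|² dt`.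
Writing `|g t|² = ∬ e^{i(x-y)t} h x conj (h y) dν dν` and integrating in `t` first (Fubini),
the Gaussian Fourier integral `∫ e^{i(x-y)t} e^{-(t/T)²} dt = √π T e^{-T²(x-y)²/4}` turns the
Gaussian-weighted integral into `√π T` times the double integral. Read backwards, the same
identity shows that the double integral is real and nonnegative.
-/

open MeasureTheory Complex ComplexConjugate
open scoped Real

namespace GaussianPlancherel

lemma integrable_exp_neg_div_sq {T : ℝ} (hT : T ≠ 0) :
    Integrable (fun t : ℝ => Real.exp (-(t / T) ^ 2)) :=
  (integrable_exp_neg_mul_sq one_pos).comp_div hT |>.congr (.of_forall fun t => by simp)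

lemma integral_cexp_mul_gaussian {T : ℝ} (hT : 0 < T) (c : ℝ) :
    ∫ t : ℝ, cexp (I * c * t) * ((Real.exp (-(t / T) ^ 2) : ℝ) : ℂ) =
      ((√π * T * Real.exp (-(T ^ 2 * c ^ 2) / 4) : ℝ) : ℂ) := by
  have hb : 0 < (((T ^ 2)⁻¹ : ℝ) : ℂ).re := by rw [ofReal_re]; positivity
  have hweight (t : ℝ) : ((Real.exp (-(t / T) ^ 2) : ℝ) : ℂ) = cexp (-(T ^ 2)⁻¹ * t ^ 2) := by
    push_cast; ring_nf
  have hsqrt : (π / ((T ^ 2)⁻¹ : ℝ) : ℂ) ^ (1 / 2 : ℂ) = ((√π * T : ℝ) : ℂ) := by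
    have : (π / ((T ^ 2)⁻¹ : ℝ) : ℂ) = ((π * T ^ 2 : ℝ) : ℂ) := by push_cast; field_simp
    rw [this, ← ofReal_one, ← ofReal_ofNat, ← ofReal_div, ← ofReal_cpow (by positivity),
      ← Real.sqrt_eq_rpow, Real.sqrt_mul Real.pi_pos.le, Real.sqrt_sq hT.le]
  simp_rw [hweight]
  rw [fourierIntegral_gaussian hb, hsqrt]
  push_cast
  congr 2
  field_simp

lemma intervalIntegral_le_exp_one_mul_integral_exp_neg_div_sq_mul {F : ℝ → ℝ} {T : ℝ}
    (hT : 0 < T) (hF0 : ∀ t, 0 ≤ F t) (hF : IntervalIntegrable F volume 0 T)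
    (hwF : Integrable (fun t => Real.exp (-(t / T) ^ 2) * F t)) :
    ∫ t in (0 : ℝ)..T, F t ≤ Real.exp 1 * ∫ t, Real.exp (-(t / T) ^ 2) * F t := by
  rw [intervalIntegral.integral_of_le hT.le, ← integral_const_mul]
  calc ∫ t in Set.Ioc 0 T, F t
      ≤ ∫ t in Set.Ioc 0 T, Real.exp 1 * (Real.exp (-(t / T) ^ 2) * F t) := by
        refine setIntegral_mono_on hF.1 (hwF.const_mul _).integrableOn measurableSet_Ioc
          fun t ⟨ht0, htT⟩ => ?_
        have hle : (t / T) ^ 2 ≤ 1 := pow_le_one₀ (by positivity) ((div_le_one hT).mpr htT)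
        rw [← mul_assoc, ← Real.exp_add]
        exact le_mul_of_one_le_left (hF0 t) (Real.one_le_exp (by linarith))
    _ ≤ _ := setIntegral_le_integral (hwF.const_mul _) (.of_forall fun t => by
        have := hF0 t; positivity)

noncomputable def fourierStieltjes (μ : Measure ℝ) (h : ℝ → ℂ) (t : ℝ) : ℂ :=
  ∫ lam, cexp (I * ((lam * t : ℝ) : ℂ)) * h lam ∂μ

noncomputable def gaussianForm (T : ℝ) (μ : Measure ℝ) (h : ℝ → ℂ) : ℂ :=
  ∫ x, ∫ y, h x * conj (h y) * ((Real.exp (-(T ^ 2 * (x - y) ^ 2) / 4) : ℝ) : ℂ) ∂μ ∂μ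

variable {μ : Measure ℝ} {h : ℝ → ℂ}

lemma norm_fourierStieltjes_le (t : ℝ) : ‖fourierStieltjes μ h t‖ ≤ ∫ lam, ‖h lam‖ ∂μ :=
  (norm_integral_le_integral_norm _).trans_eq <| by
    simp only [norm_mul, norm_exp_I_mul_ofReal, one_mul]

lemma continuous_fourierStieltjes (hh : Integrable h μ) : Continuous (fourierStieltjes μ h) :=
  continuous_of_dominated (fun t => (by fun_prop : Continuous fun lam : ℝ =>
      cexp (I * ((lam * t : ℝ) : ℂ))).aestronglyMeasurable.mul hh.aestronglyMeasurable)
    (fun t => .of_forall fun lam => by rw [norm_mul, norm_exp_I_mul_ofReal, one_mul]) hh.norm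
    (.of_forall fun lam => by fun_prop)

lemma fourierStieltjes_mul_conj [SFinite μ] (t : ℝ) :
    fourierStieltjes μ h t * conj (fourierStieltjes μ h t) =
      ∫ p, cexp (I * ((p.1 - p.2 : ℝ) : ℂ) * t) * (h p.1 * conj (h p.2)) ∂(μ.prod μ) := by
  rw [fourierStieltjes, ← integral_conj, ← integral_prod_mul]
  congr 1 with p
  rw [map_mul, ← exp_conj, map_mul, conj_I, conj_ofReal, mul_mul_mul_comm, ← exp_add]
  push_cast
  ring_nf

lemma integrable_mul_conj_prod [SFinite μ] (hh : Integrable h μ) :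
    Integrable (fun p : ℝ × ℝ => h p.1 * conj (h p.2)) (μ.prod μ) :=
  hh.mul_prod (hh.mono hh.aestronglyMeasurable.star (.of_forall fun x => by simp))

lemma integrable_mul_conj_mul_gaussian [SFinite μ] (hh : Integrable h μ) (T : ℝ) :
    Integrable (fun p : ℝ × ℝ =>
      h p.1 * conj (h p.2) * ((Real.exp (-(T ^ 2 * (p.1 - p.2) ^ 2) / 4) : ℝ) : ℂ)) (μ.prod μ) :=
  (integrable_mul_conj_prod hh).mul_bdd
    (by fun_prop : Continuous fun p : ℝ × ℝ =>
      ((Real.exp (-(T ^ 2 * (p.1 - p.2) ^ 2) / 4) : ℝ) : ℂ)).aestronglyMeasurable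
    (c := 1) (.of_forall fun p => by
      rw [norm_real, Real.norm_of_nonneg (Real.exp_nonneg _), Real.exp_le_one_iff]
      nlinarith [sq_nonneg (p.1 - p.2), sq_nonneg T])

theorem ofReal_sqrt_pi_mul_mul_gaussianForm [SFinite μ] {T : ℝ} (hT : 0 < T)
    (hh : Integrable h μ) :
    ((√π * T : ℝ) : ℂ) * gaussianForm T μ h =
      ((∫ t, Real.exp (-(t / T) ^ 2) * ‖fourierStieltjes μ h t‖ ^ 2 : ℝ) : ℂ) := by
  set F : ℝ → ℝ × ℝ → ℂ := fun t p => cexp (I * ((p.1 - p.2 : ℝ) : ℂ) * t) *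
    (((Real.exp (-(t / T) ^ 2) : ℝ) : ℂ) * (h p.1 * conj (h p.2)))
  have hF : Integrable (Function.uncurry F) (volume.prod (μ.prod μ)) :=
    ((integrable_exp_neg_div_sq hT.ne').ofReal.mul_prod (integrable_mul_conj_prod hh)).bdd_mul
      (by fun_prop : Continuous fun z : ℝ × ℝ × ℝ =>
        cexp (I * ((z.2.1 - z.2.2 : ℝ) : ℂ) * z.1)).aestronglyMeasurable
      (c := 1) (.of_forall fun z => by rw [mul_assoc, ← ofReal_mul, norm_exp_I_mul_ofReal])
  have hF_time (p : ℝ × ℝ) : ∫ t, F t p = ((√π * T : ℝ) : ℂ) *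
      (h p.1 * conj (h p.2) * ((Real.exp (-(T ^ 2 * (p.1 - p.2) ^ 2) / 4) : ℝ) : ℂ)) := by
    calc ∫ t, F t p = ∫ t : ℝ, h p.1 * conj (h p.2) * (cexp (I * ((p.1 - p.2 : ℝ) : ℂ) * t) *
          ((Real.exp (-(t / T) ^ 2) : ℝ) : ℂ)) :=
          integral_congr_ae (.of_forall fun t => by simp only [F]; ring)
      _ = _ := by rw [integral_const_mul, integral_cexp_mul_gaussian hT]; push_cast; ring
  have hF_freq (t : ℝ) : ∫ p, F t p ∂(μ.prod μ) =
      ((Real.exp (-(t / T) ^ 2) * ‖fourierStieltjes μ h t‖ ^ 2 : ℝ) : ℂ) := by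
    calc ∫ p, F t p ∂(μ.prod μ)
        = ((Real.exp (-(t / T) ^ 2) : ℝ) : ℂ) * ∫ p,
          cexp (I * ((p.1 - p.2 : ℝ) : ℂ) * t) * (h p.1 * conj (h p.2)) ∂(μ.prod μ) := by
          rw [← integral_const_mul]
          exact integral_congr_ae (.of_forall fun p => by simp only [F]; ring)
      _ = _ := by
          rw [← fourierStieltjes_mul_conj, mul_conj, normSq_eq_norm_sq]; push_cast; rfl
  calc ((√π * T : ℝ) : ℂ) * gaussianForm T μ h
      = ∫ p, ((√π * T : ℝ) : ℂ) * (h p.1 * conj (h p.2) *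
          ((Real.exp (-(T ^ 2 * (p.1 - p.2) ^ 2) / 4) : ℝ) : ℂ)) ∂(μ.prod μ) := by
        rw [integral_const_mul, integral_prod _ (integrable_mul_conj_mul_gaussian hh T),
          gaussianForm]
    _ = ∫ p, ∫ t, F t p ∂volume ∂(μ.prod μ) := by simp_rw [hF_time]
    _ = ∫ t, ∫ p, F t p ∂(μ.prod μ) := (integral_integral_swap hF).symm
    _ = _ := by simp_rw [hF_freq]; exact integral_ofReal

theorem gaussianForm_eq_ofReal [SFinite μ] {T : ℝ} (hT : 0 < T) (hh : Integrable h μ) :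
    gaussianForm T μ h = (((√π * T)⁻¹ *
      ∫ t, Real.exp (-(t / T) ^ 2) * ‖fourierStieltjes μ h t‖ ^ 2 : ℝ) : ℂ) := by
  have hc : ((√π * T : ℝ) : ℂ) ≠ 0 := ofReal_ne_zero.mpr (by positivity)
  rw [ofReal_mul, ← ofReal_sqrt_pi_mul_mul_gaussianForm hT hh, ofReal_inv, inv_mul_cancel_left₀ hc]

lemma integrable_exp_neg_div_sq_mul_norm_fourierStieltjes_sq {T : ℝ} (hT : T ≠ 0)
    (hh : Integrable h μ) :
    Integrable (fun t => Real.exp (-(t / T) ^ 2) * ‖fourierStieltjes μ h t‖ ^ 2) :=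
  (integrable_exp_neg_div_sq hT).mul_bdd
    ((continuous_fourierStieltjes hh).norm.pow 2).aestronglyMeasurable
    (c := (∫ lam, ‖h lam‖ ∂μ) ^ 2) (.of_forall fun t => by
      rw [norm_pow, norm_norm]
      exact pow_le_pow_left₀ (norm_nonneg _) (norm_fourierStieltjes_le t) 2)

end GaussianPlancherel

open GaussianPlancherel in
theorem stmt18_general (a b T : ℝ) (hT : 0 < T)
    (ν : Measure ℝ) [IsFiniteMeasure ν] (h : ℝ → ℂ) (hh : MemLp h 2 ν) :
    (∫ x in Set.Icc a b, ∫ y in Set.Icc a b,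
        h x * (starRingEnd ℂ) (h y) *
          ((Real.exp (-(T ^ 2 * (x - y) ^ 2) / 4) : ℝ) : ℂ) ∂ν ∂ν).im = 0 ∧
    0 ≤ (∫ x in Set.Icc a b, ∫ y in Set.Icc a b,
        h x * (starRingEnd ℂ) (h y) *
          ((Real.exp (-(T ^ 2 * (x - y) ^ 2) / 4) : ℝ) : ℂ) ∂ν ∂ν).re ∧
    (∫ t in (0 : ℝ)..T,
        ‖∫ lam in Set.Icc a b,
            Complex.exp (Complex.I * ((lam * t : ℝ) : ℂ)) * h lam ∂ν‖ ^ 2)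
      ≤ Real.exp 1 * Real.sqrt Real.pi * T *
          (∫ x in Set.Icc a b, ∫ y in Set.Icc a b,
            h x * (starRingEnd ℂ) (h y) *
              ((Real.exp (-(T ^ 2 * (x - y) ^ 2) / 4) : ℝ) : ℂ) ∂ν ∂ν).re := by
  set μ := ν.restrict (Set.Icc a b)
  have hi : Integrable h μ := (hh.integrable one_le_two).restrict
  change (gaussianForm T μ h).im = 0 ∧ 0 ≤ (gaussianForm T μ h).re ∧
    ∫ t in (0 : ℝ)..T, ‖fourierStieltjes μ h t‖ ^ 2 ≤ _ * (gaussianForm T μ h).re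
  rw [gaussianForm_eq_ofReal hT hi, ofReal_im, ofReal_re]
  refine ⟨rfl, by positivity, ?_⟩
  calc ∫ t in (0 : ℝ)..T, ‖fourierStieltjes μ h t‖ ^ 2
      ≤ Real.exp 1 * ∫ t, Real.exp (-(t / T) ^ 2) * ‖fourierStieltjes μ h t‖ ^ 2 :=
        intervalIntegral_le_exp_one_mul_integral_exp_neg_div_sq_mul hT (fun t => by positivity)
          (((continuous_fourierStieltjes hi).norm.pow 2).intervalIntegrable _ _)
          (integrable_exp_neg_div_sq_mul_norm_fourierStieltjes_sq hT.ne' hi)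
    _ = _ := by field_simp

/-- Gaussian-regularized Plancherel inequality (Last's lemma): for
`g(t) = ∫_{[a,b]} e^{iλt} h(λ) dν(λ)` with `h ∈ L²(ν)`,
`∫₀^T |g|² dt ≤ e √π T ∬ h(x) conj(h(y)) exp(−T²(x−y)²/4) dν dν`, the double
integral being real and nonnegative. -/
theorem stmt18 (a b T : ℝ) (hab : a ≤ b) (hT : 0 < T)
    (ν : Measure ℝ) [IsFiniteMeasure ν] (h : ℝ → ℂ) (hh : MemLp h 2 ν) :
    (∫ x in Set.Icc a b, ∫ y in Set.Icc a b,
        h x * (starRingEnd ℂ) (h y) *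
          ((Real.exp (-(T ^ 2 * (x - y) ^ 2) / 4) : ℝ) : ℂ) ∂ν ∂ν).im = 0 ∧
    0 ≤ (∫ x in Set.Icc a b, ∫ y in Set.Icc a b,
        h x * (starRingEnd ℂ) (h y) *
          ((Real.exp (-(T ^ 2 * (x - y) ^ 2) / 4) : ℝ) : ℂ) ∂ν ∂ν).re ∧
    (∫ t in (0 : ℝ)..T,
        ‖∫ lam in Set.Icc a b,
            Complex.exp (Complex.I * ((lam * t : ℝ) : ℂ)) * h lam ∂ν‖ ^ 2)
      ≤ Real.exp 1 * Real.sqrt Real.pi * T *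
          (∫ x in Set.Icc a b, ∫ y in Set.Icc a b,
            h x * (starRingEnd ℂ) (h y) *
              ((Real.exp (-(T ^ 2 * (x - y) ^ 2) / 4) : ℝ) : ℂ) ∂ν ∂ν).re :=
  stmt18_general a b T hT ν h hh
end
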